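/- arXiv:0906.2252 — 5 statements merged into one kernel-verified Lean document; each statement's English description precedes it below -/
import Mathlib

section
/- Let H1 ∈ ℂ^{r×t_x}, H2 ∈ ℂ^{r×t_s}, let ΣX ∈ ℂ^{t_x×t_x} and ΣZ ∈ ℂ^{r×r} be Hermitian positive definite, and let ΣS ∈ ℂ^{t_s×t_s} be Hermitian positive semidefinite. Then for every inflation factor W ∈ ℂ^{t_x×t_s}, det ΣX · det(ΣZ + H1 ΣX H1* + H2 ΣS H2*) · det ΣZ ≤ det M(W;ΣX,ΣS,ΣZ) · det(ΣZ + H1 ΣX H1*). Equivalently, the per-realization DPC rate R(W) is at most the no-interference upper bound log( det(ΣZ + H1 ΣX H1*) / det ΣZ ). -/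
/-!
Let `M₀ = [[ΣX, ΣX H1*], [H1 ΣX, ΣZ + H1 ΣX H1*]]` be the covariance of `(X, H1 X + Z)` without
interference; then `M = M₀ + V ΣS V*` with `V = [W; H2]`. Taking Schur complements of the
lower-right blocks, `det ΣX · det ΣZ / det(ΣZ + H1 ΣX H1*)` and
`det M / det(ΣZ + H1 ΣX H1* + H2 ΣS H2*)` are the determinants of the Schur complements of `M₀`
and of `M`. The Schur complement is monotone in the Loewner order and the determinant is monotone
on positive semidefinite matrices, so the first ratio is at most the second.
-/

open Matrix
open scoped ComplexOrder

/-- The DPC covariance block matrix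
`M(W; ΣX, ΣS, ΣZ) = [[ΣX + W ΣS W*, ΣX H1* + W ΣS H2*],
                     [H1 ΣX + H2 ΣS W*, ΣZ + H1 ΣX H1* + H2 ΣS H2*]]`. -/
noncomputable def dpcM {r tx ts : ℕ}
    (H1 : Matrix (Fin r) (Fin tx) ℂ) (H2 : Matrix (Fin r) (Fin ts) ℂ)
    (W : Matrix (Fin tx) (Fin ts) ℂ)
    (SX : Matrix (Fin tx) (Fin tx) ℂ) (SS : Matrix (Fin ts) (Fin ts) ℂ)
    (SZ : Matrix (Fin r) (Fin r) ℂ) :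
    Matrix (Fin tx ⊕ Fin r) (Fin tx ⊕ Fin r) ℂ :=
  fromBlocks (SX + W * SS * Wᴴ) (SX * H1ᴴ + W * SS * H2ᴴ)
    (H1 * SX + H2 * SS * Wᴴ) (SZ + H1 * SX * H1ᴴ + H2 * SS * H2ᴴ)

open scoped MatrixOrder

namespace Matrix

variable {𝕜 m n : Type*} [RCLike 𝕜] [Fintype n] [DecidableEq n]

theorem PosSemidef.one_le_det_one_add {C : Matrix n n 𝕜} (hC : C.PosSemidef) :
    1 ≤ (1 + C).det := by
  have hsa : IsSelfAdjoint C := hC.1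
  have hcfc : 1 + C = cfc (fun x : ℝ => 1 + x) C := by
    rw [cfc_add .., cfc_const_one .., cfc_id' ..]
  rw [hcfc, hC.1.cfc_eq]
  simp only [IsHermitian.cfc, det_map, det_diagonal, Function.comp_apply, map_add, map_one]
  exact Finset.one_le_prod fun i _ =>
    le_add_of_nonneg_right (RCLike.ofReal_nonneg.mpr (hC.eigenvalues_nonneg i))

theorem PosSemidef.det_le_det_of_le {A B : Matrix n n 𝕜} (hA : A.PosSemidef) (hAB : A ≤ B) :
    A.det ≤ B.det := by
  rw [le_iff] at hAB
  by_cases hdet : A.det = 0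
  · exact hdet ▸ (add_sub_cancel A B ▸ hA.add hAB).det_nonneg
  set S := CFC.sqrt A
  have hS : S.PosSemidef := (CFC.sqrt_nonneg A).posSemidef
  have hSS : S * S = A := CFC.sqrt_mul_sqrt_self A hA.nonneg
  have hSu : IsUnit S.det := by
    rw [isUnit_iff_ne_zero]
    rintro h
    exact hdet (by rw [← hSS, det_mul, h, zero_mul])
  have hC : (S⁻¹ * (B - A) * S⁻¹).PosSemidef := by
    simpa [conjTranspose_nonsing_inv, hS.1.eq] using hAB.mul_mul_conjTranspose_same S⁻¹
  have hfac : B = S * (1 + S⁻¹ * (B - A) * S⁻¹) * S := by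
    rw [Matrix.mul_add, Matrix.mul_one, Matrix.add_mul, hSS, Matrix.mul_assoc S⁻¹,
      mul_nonsing_inv_cancel_left _ _ hSu, nonsing_inv_mul_cancel_right _ _ hSu, add_sub_cancel]
  calc A.det = A.det * 1 := (mul_one _).symm
    _ ≤ A.det * (1 + S⁻¹ * (B - A) * S⁻¹).det :=
        mul_le_mul_of_nonneg_left hC.one_le_det_one_add hA.det_nonneg
    _ = B.det := by
        conv_rhs => rw [hfac]
        rw [← hSS, det_mul, det_mul, det_mul]
        ring

theorem schur_complement_le_of_le [Fintype m] {A A' : Matrix m m 𝕜} {B B' : Matrix m n 𝕜}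
    {D D' : Matrix n n 𝕜} (hD : D.PosDef) (hD' : D'.PosDef)
    (h : fromBlocks A B Bᴴ D ≤ fromBlocks A' B' B'ᴴ D') :
    A - B * D⁻¹ * Bᴴ ≤ A' - B' * D'⁻¹ * B'ᴴ := by
  have := hD.isUnit.invertible
  have := hD'.isUnit.invertible
  have hP : (fromBlocks (B * D⁻¹ * Bᴴ) B Bᴴ D).PosSemidef := by
    rw [PosDef.fromBlocks₂₂ _ _ hD, sub_self]
    exact .zero
  have hQ : (fromBlocks (A' - (A - B * D⁻¹ * Bᴴ)) B' B'ᴴ D').PosSemidef := by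
    convert (le_iff.mp h).add hP using 1
    rw [sub_eq_add_neg (fromBlocks _ _ _ _), fromBlocks_neg, fromBlocks_add, fromBlocks_add]
    congr 1 <;> abel
  rw [le_iff]
  simpa [sub_sub, add_comm] using (PosDef.fromBlocks₂₂ _ _ hD').mp hQ

theorem det_fromBlocks_mul_det_le_of_le [Fintype m] [DecidableEq m] {A A' : Matrix m m 𝕜}
    {B B' : Matrix m n 𝕜} {D D' : Matrix n n 𝕜} (hD : D.PosDef) (hD' : D'.PosDef)
    (hP : (fromBlocks A B Bᴴ D).PosSemidef)
    (h : fromBlocks A B Bᴴ D ≤ fromBlocks A' B' B'ᴴ D') :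
    (fromBlocks A B Bᴴ D).det * D'.det ≤ (fromBlocks A' B' B'ᴴ D').det * D.det := by
  have := hD.isUnit.invertible
  have := hD'.isUnit.invertible
  have hS : (A - B * D⁻¹ * Bᴴ).PosSemidef := (PosDef.fromBlocks₂₂ _ _ hD).mp hP
  rw [det_fromBlocks₂₂, det_fromBlocks₂₂, invOf_eq_nonsing_inv, invOf_eq_nonsing_inv]
  calc D.det * (A - B * D⁻¹ * Bᴴ).det * D'.det
      = D.det * D'.det * (A - B * D⁻¹ * Bᴴ).det := by ring
    _ ≤ D.det * D'.det * (A' - B' * D'⁻¹ * B'ᴴ).det :=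
        mul_le_mul_of_nonneg_left (hS.det_le_det_of_le (schur_complement_le_of_le hD hD' h))
          (mul_nonneg hD.det_pos.le hD'.det_pos.le)
    _ = D'.det * (A' - B' * D'⁻¹ * B'ᴴ).det * D.det := by ring

theorem PosDef.sub_conjTranspose_mul_inv_mul_eq {A : Matrix n n 𝕜}
    (hA : A.PosDef) (H : Matrix m n 𝕜) (Z : Matrix m m 𝕜) :
    Z + H * A * Hᴴ - (A * Hᴴ)ᴴ * A⁻¹ * (A * Hᴴ) = Z := by
  rw [conjTranspose_mul, conjTranspose_conjTranspose, hA.1.eq,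
    mul_nonsing_inv_cancel_right _ _ (hA.isUnit.map detMonoidHom), ← Matrix.mul_assoc,
    add_sub_cancel_right]

end Matrix

noncomputable def noInterferenceCov {r tx : ℕ} (H1 : Matrix (Fin r) (Fin tx) ℂ)
    (SX : Matrix (Fin tx) (Fin tx) ℂ) (SZ : Matrix (Fin r) (Fin r) ℂ) :
    Matrix (Fin tx ⊕ Fin r) (Fin tx ⊕ Fin r) ℂ :=
  fromBlocks SX (SX * H1ᴴ) (SX * H1ᴴ)ᴴ (SZ + H1 * SX * H1ᴴ)

section DPC

variable {r tx ts : ℕ} (H1 : Matrix (Fin r) (Fin tx) ℂ) (H2 : Matrix (Fin r) (Fin ts) ℂ)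
  (W : Matrix (Fin tx) (Fin ts) ℂ) {SX : Matrix (Fin tx) (Fin tx) ℂ}
  {SS : Matrix (Fin ts) (Fin ts) ℂ} {SZ : Matrix (Fin r) (Fin r) ℂ}

theorem det_noInterferenceCov (hSX : SX.PosDef) :
    (noInterferenceCov H1 SX SZ).det = SX.det * SZ.det := by
  have := hSX.isUnit.invertible
  rw [noInterferenceCov, det_fromBlocks₁₁, invOf_eq_nonsing_inv,
    hSX.sub_conjTranspose_mul_inv_mul_eq]

theorem posDef_noInterferenceCov (hSX : SX.PosDef) (hSZ : SZ.PosDef) :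
    (noInterferenceCov H1 SX SZ).PosDef := by
  have := hSX.isUnit.invertible
  have hpsd : (noInterferenceCov H1 SX SZ).PosSemidef := by
    rw [noInterferenceCov, PosDef.fromBlocks₁₁ _ _ hSX, hSX.sub_conjTranspose_mul_inv_mul_eq]
    exact hSZ.posSemidef
  rw [hpsd.posDef_iff_det_ne_zero, det_noInterferenceCov H1 hSX]
  exact mul_ne_zero hSX.det_pos.ne' hSZ.det_pos.ne'

theorem dpcM_eq_fromBlocks (hSX : SX.IsHermitian) (hSS : SS.IsHermitian) :
    dpcM H1 H2 W SX SS SZ = fromBlocks (SX + W * SS * Wᴴ) (SX * H1ᴴ + W * SS * H2ᴴ)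
      (SX * H1ᴴ + W * SS * H2ᴴ)ᴴ (SZ + H1 * SX * H1ᴴ + H2 * SS * H2ᴴ) := by
  simp [dpcM, conjTranspose_mul, hSX.eq, hSS.eq, Matrix.mul_assoc]

theorem dpcM_eq_noInterferenceCov_add (hSX : SX.IsHermitian) (hSS : SS.IsHermitian) :
    dpcM H1 H2 W SX SS SZ =
      noInterferenceCov H1 SX SZ + fromRows W H2 * SS * (fromRows W H2)ᴴ := by
  rw [dpcM_eq_fromBlocks H1 H2 W hSX hSS, noInterferenceCov, fromRows_mul,
    conjTranspose_fromRows_eq_fromCols_conjTranspose, fromRows_mul_fromCols, fromBlocks_add]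
  simp [conjTranspose_mul, hSS.eq, Matrix.mul_assoc]

theorem noInterferenceCov_le_dpcM (hSX : SX.IsHermitian) (hSS : SS.PosSemidef) :
    noInterferenceCov H1 SX SZ ≤ dpcM H1 H2 W SX SS SZ := by
  rw [dpcM_eq_noInterferenceCov_add H1 H2 W hSX hSS.1, le_iff, add_sub_cancel_left]
  exact hSS.mul_mul_conjTranspose_same _

theorem posDef_dpcM (hSX : SX.PosDef) (hSZ : SZ.PosDef) (hSS : SS.PosSemidef) :
    (dpcM H1 H2 W SX SS SZ).PosDef := by
  rw [dpcM_eq_noInterferenceCov_add H1 H2 W hSX.1 hSS.1]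
  exact (posDef_noInterferenceCov H1 hSX hSZ).add_posSemidef (hSS.mul_mul_conjTranspose_same _)

theorem det_mul_det_mul_det_le_det_dpcM_mul_det (hSX : SX.PosDef) (hSZ : SZ.PosDef)
    (hSS : SS.PosSemidef) :
    SX.det * SZ.det * (SZ + H1 * SX * H1ᴴ + H2 * SS * H2ᴴ).det
      ≤ (dpcM H1 H2 W SX SS SZ).det * (SZ + H1 * SX * H1ᴴ).det := by
  have hE : (SZ + H1 * SX * H1ᴴ).PosDef :=
    hSZ.add_posSemidef (hSX.posSemidef.mul_mul_conjTranspose_same H1)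
  have hD : (SZ + H1 * SX * H1ᴴ + H2 * SS * H2ᴴ).PosDef :=
    hE.add_posSemidef (hSS.mul_mul_conjTranspose_same H2)
  have hle := noInterferenceCov_le_dpcM H1 H2 W (SZ := SZ) hSX.1 hSS
  rw [← det_noInterferenceCov H1 hSX]
  rw [dpcM_eq_fromBlocks H1 H2 W hSX.1 hSS.1] at hle ⊢
  exact det_fromBlocks_mul_det_le_of_le hE hD (posDef_noInterferenceCov H1 hSX hSZ).posSemidef hle

end DPC

/-- for every inflation factor `W`,
`det ΣX · det(ΣZ + H1 ΣX H1* + H2 ΣS H2*) · det ΣZ ≤ det M(W) · det(ΣZ + H1 ΣX H1*)`;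
equivalently, the per-realization DPC rate `R(W)` is at most the no-interference
upper bound `log( det(ΣZ + H1 ΣX H1*) / det ΣZ )`. -/
theorem dpc_rate_le_noInterference_bound {r tx ts : ℕ}
    (H1 : Matrix (Fin r) (Fin tx) ℂ) (H2 : Matrix (Fin r) (Fin ts) ℂ)
    (SX : Matrix (Fin tx) (Fin tx) ℂ) (SS : Matrix (Fin ts) (Fin ts) ℂ)
    (SZ : Matrix (Fin r) (Fin r) ℂ)
    (hSX : SX.PosDef) (hSZ : SZ.PosDef) (hSS : SS.PosSemidef)
    (W : Matrix (Fin tx) (Fin ts) ℂ) :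
    SX.det.re * (SZ + H1 * SX * H1ᴴ + H2 * SS * H2ᴴ).det.re * SZ.det.re
      ≤ (dpcM H1 H2 W SX SS SZ).det.re * (SZ + H1 * SX * H1ᴴ).det.re
    ∧ Real.log ((SX.det.re * (SZ + H1 * SX * H1ᴴ + H2 * SS * H2ᴴ).det.re) /
          (dpcM H1 H2 W SX SS SZ).det.re)
        ≤ Real.log ((SZ + H1 * SX * H1ᴴ).det.re / SZ.det.re) := by
  have hE : (SZ + H1 * SX * H1ᴴ).PosDef :=
    hSZ.add_posSemidef (hSX.posSemidef.mul_mul_conjTranspose_same H1)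
  have hD : (SZ + H1 * SX * H1ᴴ + H2 * SS * H2ᴴ).PosDef :=
    hE.add_posSemidef (hSS.mul_mul_conjTranspose_same H2)
  have hM := posDef_dpcM H1 H2 W hSX hSZ hSS
  have key := det_mul_det_mul_det_le_det_dpcM_mul_det H1 H2 W hSX hSZ hSS
  have hre {z : ℂ} (hz : 0 < z) : z = z.re := Complex.eq_re_of_ofReal_le (by exact_mod_cast hz.le)
  rw [hre hSX.det_pos, hre hSZ.det_pos, hre hD.det_pos, hre hM.det_pos, hre hE.det_pos] at key
  norm_cast at key
  have hx := (Complex.pos_iff.mp hSX.det_pos).1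
  have hz := (Complex.pos_iff.mp hSZ.det_pos).1
  have hd := (Complex.pos_iff.mp hD.det_pos).1
  have hm := (Complex.pos_iff.mp hM.det_pos).1
  have he := (Complex.pos_iff.mp hE.det_pos).1
  refine ⟨by linarith, ?_⟩
  rw [Real.log_le_log_iff (div_pos (mul_pos hx hd) hm) (div_pos he hz), div_le_div_iff₀ hm hz]
  linarith
end

section
/- Let A and B be n×n Hermitian positive semidefinite complex matrices such that A + B is positive definite. Then as the real parameter P tends to infinity, log det(P·A + B) / log P tends to rank(A). (Here det(P·A + B) is a positive real for every P ≥ 1.) -/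
open Matrix Filter Topology
open scoped ComplexOrder

/-!
Write `A + B = Xᴴ X` with `X` invertible. Then `P • A + B = Xᴴ (1 + (P - 1) • M) X` for the
positive semidefinite matrix `M = Xᴴ⁻¹ A X⁻¹`, which has the same rank as `A`; hence
`det (P • A + B) = det (A + B) * ∏ᵢ (1 + (P - 1) μᵢ)` over the eigenvalues `μᵢ ≥ 0` of `M`.
A factor with `μᵢ > 0` grows like `μᵢ P`, so contributes `log P + O(1)`; the others are `1`.
The number of nonzero `μᵢ` is `rank M = rank A`.
-/

theorem Real.tendsto_log_mul_add_div_log_atTop {a : ℝ} (ha : 0 < a) (b : ℝ) :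
    Tendsto (fun x => Real.log (a * x + b) / Real.log x) atTop (𝓝 1) := by
  have hinner : Tendsto (fun x : ℝ => a + b / x) atTop (𝓝 a) := by
    simpa using tendsto_const_nhds.add (tendsto_const_nhds.div_atTop (tendsto_id (α := ℝ)))
  have hrem : Tendsto (fun x => Real.log (a + b / x) / Real.log x) atTop (𝓝 0) :=
    ((Real.continuousAt_log ha.ne').tendsto.comp hinner).div_atTop Real.tendsto_log_atTop
  have hsum : Tendsto (fun x => 1 + Real.log (a + b / x) / Real.log x) atTop (𝓝 1) := by
    simpa using hrem.const_add 1
  refine hsum.congr' ?_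
  filter_upwards [eventually_gt_atTop 1, hinner.eventually (lt_mem_nhds ha)] with x hx hpos
  have hx0 : x ≠ 0 := by positivity
  rw [show a * x + b = x * (a + b / x) by field_simp, Real.log_mul hx0 hpos.ne',
    add_div, div_self (Real.log_pos hx).ne', add_comm]

theorem tendsto_log_mul_prod_div_log_atTop {ι : Type*} [Fintype ι] {c : ℝ} (hc : 0 < c)
    {μ : ι → ℝ} (hμ : ∀ i, 0 ≤ μ i) :
    Tendsto (fun P => Real.log (c * ∏ i, (1 + (P - 1) * μ i)) / Real.log P) atTop
      (𝓝 (Fintype.card {i // μ i ≠ 0})) := by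
  classical
  have hterm (i : ι) : Tendsto (fun P => Real.log (1 + (P - 1) * μ i) / Real.log P) atTop
      (𝓝 (if μ i ≠ 0 then 1 else 0)) := by
    rcases (hμ i).eq_or_lt with h | h
    · simp [← h]
    · simpa [h.ne', show ∀ P, 1 + (P - 1) * μ i = μ i * P + (1 - μ i) by intro; ring] using
        Real.tendsto_log_mul_add_div_log_atTop h (1 - μ i)
  have hsum := (tendsto_const_nhds.div_atTop Real.tendsto_log_atTop (a := Real.log c)).add
    (tendsto_finsetSum Finset.univ fun i _ => hterm i)
  rw [zero_add, Finset.sum_boole, ← Fintype.card_subtype] at hsum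
  refine hsum.congr' ?_
  filter_upwards [eventually_ge_atTop 1] with P hP
  have hpos (i : ι) : 0 < 1 + (P - 1) * μ i := by nlinarith [hμ i]
  rw [Real.log_mul hc.ne' (Finset.prod_pos fun i _ => hpos i).ne',
    Real.log_prod fun i _ => (hpos i).ne', add_div, Finset.sum_div]

theorem Matrix.det_smul_add_mul {n S R : Type*} [Fintype n] [DecidableEq n] [CommSemiring S]
    [CommRing R] [Algebra S R] {X Y : Matrix n n R} (hX : IsUnit X.det) (hY : IsUnit Y.det)
    (t : S) (A : Matrix n n R) :
    det (t • A + Y * X) = det (Y * X) * det (1 + t • (Y⁻¹ * A * X⁻¹)) := by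
  have hfactor : t • A + Y * X = Y * (1 + t • (Y⁻¹ * A * X⁻¹)) * X := by
    rw [mul_add, add_mul, mul_one, mul_smul_comm, smul_mul_assoc, ← mul_assoc, ← mul_assoc,
      mul_nonsing_inv _ hY, one_mul, mul_assoc, nonsing_inv_mul _ hX, mul_one, add_comm]
  rw [hfactor, det_mul, det_mul, det_mul]
  ring

theorem Matrix.IsHermitian.det_one_add_smul_eq_prod_eigenvalues {n 𝕜 : Type*} [Fintype n]
    [DecidableEq n] [RCLike 𝕜] {M : Matrix n n 𝕜} (hM : M.IsHermitian) (t : ℝ) :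
    det (1 + t • M) = ((∏ i, (1 + t * hM.eigenvalues i) : ℝ) : 𝕜) := by
  set U := hM.eigenvectorUnitary
  rw [RCLike.real_smul_eq_coe_smul (K := 𝕜)]
  have hconj : 1 + (t : 𝕜) • M
      = Unitary.conjStarAlgAut 𝕜 _ U
          (1 + (t : 𝕜) • diagonal (RCLike.ofReal ∘ hM.eigenvalues)) := by
    rw [map_add, map_one, map_smul, ← hM.spectral_theorem]
  rw [hconj, Unitary.conjStarAlgAut_apply, det_mul, det_mul, mul_right_comm, ← det_mul,
    Unitary.mul_star_self_of_mem U.2, det_one, one_mul, ← diagonal_one, ← diagonal_smul,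
    diagonal_add, det_diagonal]
  simp

theorem logDet_div_logP_tendsto_rank_general {n : ℕ}
    (A B : Matrix (Fin n) (Fin n) ℂ)
    (hA : A.PosSemidef) (hAB : (A + B).PosDef) :
    (∀ P : ℝ, 1 ≤ P → 0 < ((P : ℂ) • A + B).det.re)
    ∧ Tendsto (fun P : ℝ => Real.log (((P : ℂ) • A + B).det.re) / Real.log P)
        atTop (nhds (A.rank : ℝ)) := by
  classical
  open scoped MatrixOrder in
  obtain ⟨X, hX⟩ := CStarAlgebra.nonneg_iff_eq_star_mul_self.mp hAB.posSemidef.nonneg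
  rw [star_eq_conjTranspose] at hX
  have hXdet : IsUnit X.det := by
    refine isUnit_iff_ne_zero.mpr (right_ne_zero_of_mul (a := Xᴴ.det) ?_)
    rw [← det_mul, ← hX]
    exact hAB.det_pos.ne'
  have hXHdet : IsUnit Xᴴ.det := by simpa [det_conjTranspose] using hXdet.star
  have hM : ((Xᴴ)⁻¹ * A * X⁻¹).PosSemidef := by
    simpa [conjTranspose_nonsing_inv] using hA.conjTranspose_mul_mul_same X⁻¹
  set c := ∏ i, hAB.1.eigenvalues i
  have hc : 0 < c := Finset.prod_pos fun i _ => hAB.eigenvalues_pos i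
  have hdet (P : ℝ) : ((P : ℂ) • A + B).det
      = ((c * ∏ i, (1 + (P - 1) * hM.1.eigenvalues i) : ℝ) : ℂ) := by
    have hsplit : (P : ℂ) • A + B = (P - 1) • A + Xᴴ * X := by
      rw [← hX, Complex.coe_smul]; module
    rw [hsplit, det_smul_add_mul hXdet hXHdet, hM.1.det_one_add_smul_eq_prod_eigenvalues, ← hX,
      hAB.1.det_eq_prod_eigenvalues]
    simp [c]
  have hrank : A.rank = Fintype.card {i // hM.1.eigenvalues i ≠ 0} := by
    rw [← hM.1.rank_eq_card_non_zero_eigs,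
      rank_mul_eq_left_of_isUnit_det _ _ (isUnit_nonsing_inv_det _ hXdet),
      rank_mul_eq_right_of_isUnit_det _ _ (isUnit_nonsing_inv_det _ hXHdet)]
  simp only [hdet, Complex.ofReal_re, hrank]
  refine ⟨fun P hP => mul_pos hc (Finset.prod_pos fun i _ => ?_),
    tendsto_log_mul_prod_div_log_atTop hc hM.eigenvalues_nonneg⟩
  nlinarith [hM.eigenvalues_nonneg i]

/-- if `A, B` are Hermitian positive semidefinite and `A + B` is
positive definite, then `det(P·A + B)` is a positive real for every `P ≥ 1`, and
`log det(P·A + B) / log P → rank A` as the real parameter `P → ∞`. -/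
theorem logDet_div_logP_tendsto_rank {n : ℕ}
    (A B : Matrix (Fin n) (Fin n) ℂ)
    (hA : A.PosSemidef) (hB : B.PosSemidef) (hAB : (A + B).PosDef) :
    (∀ P : ℝ, 1 ≤ P → 0 < ((P : ℂ) • A + B).det.re)
    ∧ Tendsto (fun P : ℝ => Real.log (((P : ℂ) • A + B).det.re) / Real.log P)
        atTop (nhds (A.rank : ℝ)) :=
  logDet_div_logP_tendsto_rank_general A B hA hAB
end

section
/- Let A and B be n×n Hermitian positive semidefinite complex matrices such that A + B is positive definite. Then there exists a real constant L > 0 such that det(P·A + B) / P^{rank(A)} tends to L as the real parameter P tends to infinity. In particular, log det(P·A + B) − rank(A)·log P remains bounded as P → ∞. -/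
/-!
Write `C = A + B = S * S` with `S` Hermitian and invertible, and `M = S⁻¹ * A * S⁻¹`, which is
positive semidefinite of the same rank as `A`. Then `P • A + B = S * ((P - 1) • M + 1) * S`, so
`det (P • A + B) = det C * ∏ i, (μ i * P + (1 - μ i))` over the eigenvalues `μ i ≥ 0` of `M`.
Exactly `rank A` of the factors grow linearly in `P`, the others are equal to `1`, whence the
limit `det C * ∏_{μ i ≠ 0} μ i > 0`; the logarithmic bound follows by taking logarithms.
-/

open Matrix Filter Finset Topology
open scoped ComplexOrder

namespace Matrix
variable {𝕜 n : Type*} [RCLike 𝕜] [Fintype n] [DecidableEq n]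

theorem IsHermitian.det_smul_add_one {M : Matrix n n 𝕜} (hM : M.IsHermitian) (x : 𝕜) :
    (x • M + 1).det = ∏ i, (x * hM.eigenvalues i + 1) := by
  have hconj : x • M + 1 = Unitary.conjStarAlgAut 𝕜 _ hM.eigenvectorUnitary
      (diagonal fun i => x * hM.eigenvalues i + 1) := by
    conv_lhs => rw [hM.spectral_theorem]
    rw [← map_one (Unitary.conjStarAlgAut 𝕜 _ hM.eigenvectorUnitary), ← map_smul, ← map_add,
      ← diagonal_one, ← diagonal_smul, ← diagonal_add]
    rfl
  rw [hconj, Unitary.conjStarAlgAut_apply, det_conj_of_mul_eq_one, det_diagonal]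
  · exact Unitary.mul_star_self_of_mem hM.eigenvectorUnitary.2
  · exact Unitary.star_mul_self_of_mem hM.eigenvectorUnitary.2

open scoped MatrixOrder in
theorem PosDef.exists_isHermitian_isUnit_mul_self_eq {C : Matrix n n 𝕜} (hC : C.PosDef) :
    ∃ S : Matrix n n 𝕜, S.IsHermitian ∧ IsUnit S ∧ S * S = C :=
  ⟨CFC.sqrt C, (CFC.sqrt_nonneg C).posSemidef.isHermitian,
    (CFC.isUnit_sqrt_iff C hC.posSemidef.nonneg).mpr hC.isUnit,
    CFC.sqrt_mul_sqrt_self C hC.posSemidef.nonneg⟩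

theorem PosSemidef.exists_det_smul_add_eq_mul_prod {A B : Matrix n n 𝕜} (hA : A.PosSemidef)
    (hAB : (A + B).PosDef) :
    ∃ c : ℝ, 0 < c ∧ ∃ μ : n → ℝ, (∀ i, 0 ≤ μ i) ∧ #{i | μ i ≠ 0} = A.rank ∧
      ∀ x : 𝕜, (x • A + B).det = c * ∏ i, (μ i * x + (1 - μ i)) := by
  obtain ⟨c, hc, hcdet⟩ := RCLike.pos_iff_exists_ofReal.mp hAB.det_pos
  obtain ⟨S, hSH, hSU, hSS⟩ := hAB.exists_isHermitian_isUnit_mul_self_eq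
  have hSdet : IsUnit S.det := (isUnit_iff_isUnit_det S).mp hSU
  have hSinvdet : IsUnit S⁻¹.det := isUnit_nonsing_inv_det_iff.mpr hSdet
  set M := S⁻¹ * A * S⁻¹ with hMdef
  have hM : M.PosSemidef := by simpa [hSH.inv.eq] using hA.conjTranspose_mul_mul_same S⁻¹
  have hSMS : S * M * S = A := by
    simp only [M, ← mul_assoc, mul_nonsing_inv _ hSdet, one_mul]
    rw [mul_assoc, nonsing_inv_mul _ hSdet, mul_one]
  have hpencil (x : 𝕜) : x • A + B = S * ((x - 1) • M + 1) * S := by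
    calc x • A + B = (x - 1) • A + (A + B) := by module
      _ = S * ((x - 1) • M + 1) * S := by
        rw [← hSS, ← hSMS, Matrix.mul_add, Matrix.add_mul, Matrix.mul_smul, Matrix.smul_mul,
          mul_one]
  refine ⟨c, hc, hM.1.eigenvalues, hM.eigenvalues_nonneg, ?_, fun x => ?_⟩
  · rw [← Fintype.card_subtype, ← hM.1.rank_eq_card_non_zero_eigs, hMdef,
      rank_mul_eq_left_of_isUnit_det _ _ hSinvdet, rank_mul_eq_right_of_isUnit_det _ _ hSinvdet]
  · rw [hpencil, det_mul, det_mul, hM.1.det_smul_add_one, mul_right_comm, ← det_mul, hSS, ← hcdet]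
    congr 1
    exact prod_congr rfl fun i _ => by ring

end Matrix

theorem tendsto_prod_mul_add_div_pow {ι : Type*} [Fintype ι] (a b : ι → ℝ) :
    Tendsto (fun P : ℝ => (∏ i, (a i * P + b i)) / P ^ #{i | a i ≠ 0}) atTop
      (𝓝 ((∏ i with a i ≠ 0, a i) * ∏ i with a i = 0, b i)) := by
  have hlead : ∀ i ∈ ({i | a i ≠ 0} : Finset ι),
      Tendsto (fun P : ℝ => (a i * P + b i) / P) atTop (𝓝 (a i)) := fun i _ => by
    have : Tendsto (fun P : ℝ => a i + b i / P) atTop (𝓝 (a i + 0)) :=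
      tendsto_const_nhds.add (tendsto_const_nhds.div_atTop tendsto_id)
    rw [add_zero] at this
    refine this.congr' ?_
    filter_upwards [eventually_ne_atTop 0] with P hP
    field_simp
  refine ((tendsto_finsetProd _ hlead).mul_const _).congr' ?_
  filter_upwards [eventually_ne_atTop 0] with P hP
  have hconst : ∀ i ∈ ({i | ¬a i ≠ 0} : Finset ι), a i * P + b i = b i := fun i hi => by
    rw [(by simpa using hi : a i = 0), zero_mul, zero_add]
  rw [← prod_filter_mul_prod_filter_not univ (fun i => a i ≠ 0), prod_congr rfl hconst,
    ← prod_const, mul_div_right_comm, ← prod_div_distrib]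
  simp only [ne_eq, not_not]

theorem exists_abs_log_sub_mul_log_le_of_tendsto_div_pow {f : ℝ → ℝ} {k : ℕ} {L : ℝ}
    (hL : 0 < L) (hf : Tendsto (fun P => f P / P ^ k) atTop (𝓝 L)) :
    ∃ C : ℝ, ∀ᶠ P : ℝ in atTop, |Real.log (f P) - k * Real.log P| ≤ C := by
  refine ⟨|Real.log L| + 1, ?_⟩
  have hlog := (hf.log hL.ne').abs
  filter_upwards [hlog.eventually (eventually_le_nhds (lt_add_one _)),
    hf.eventually (eventually_gt_nhds hL), eventually_gt_atTop 0] with P hle hpos hP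
  have hfP : f P ≠ 0 := by rintro h; simp [h] at hpos
  rwa [Real.log_div hfP (pow_ne_zero _ hP.ne'), Real.log_pow] at hle

theorem det_div_pow_rank_tendsto_const_general {n : ℕ}
    (A B : Matrix (Fin n) (Fin n) ℂ)
    (hA : A.PosSemidef) (hAB : (A + B).PosDef) :
    (∃ L : ℝ, 0 < L ∧
      Tendsto (fun P : ℝ => ((P : ℂ) • A + B).det.re / P ^ A.rank)
        atTop (nhds L))
    ∧ ∃ C : ℝ, ∀ᶠ P : ℝ in atTop,
        |Real.log (((P : ℂ) • A + B).det.re) - (A.rank : ℝ) * Real.log P| ≤ C := by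
  obtain ⟨c, hc, μ, hμ, hrank, hdet⟩ := hA.exists_det_smul_add_eq_mul_prod hAB
  have hdet_re (P : ℝ) : ((P : ℂ) • A + B).det.re = c * ∏ i, (μ i * P + (1 - μ i)) := by
    rw [hdet, ← RCLike.ofReal_re (K := ℂ) (c * _)]
    push_cast
    rfl
  have hL : 0 < c * ((∏ i with μ i ≠ 0, μ i) * ∏ i with μ i = 0, (1 - μ i)) := by
    refine mul_pos hc (mul_pos (prod_pos fun i hi => ?_) (prod_pos fun i hi => ?_))
    · exact (hμ i).lt_of_ne' (mem_filter.mp hi).2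
    · simp [(mem_filter.mp hi).2]
  have htend : Tendsto (fun P : ℝ => ((P : ℂ) • A + B).det.re / P ^ A.rank) atTop
      (𝓝 (c * ((∏ i with μ i ≠ 0, μ i) * ∏ i with μ i = 0, (1 - μ i)))) := by
    simpa only [hdet_re, ← hrank, mul_div_assoc] using
      (tendsto_prod_mul_add_div_pow μ (fun i => 1 - μ i)).const_mul c
  exact ⟨⟨_, hL, htend⟩, exists_abs_log_sub_mul_log_le_of_tendsto_div_pow hL htend⟩

/-- if `A, B` are Hermitian positive semidefinite and `A + B` is
positive definite, then there is a constant `L > 0` with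
`det(P·A + B) / P^(rank A) → L` as `P → ∞`; in particular
`log det(P·A + B) − rank A · log P` remains bounded as `P → ∞`. -/
theorem det_div_pow_rank_tendsto_const {n : ℕ}
    (A B : Matrix (Fin n) (Fin n) ℂ)
    (hA : A.PosSemidef) (hB : B.PosSemidef) (hAB : (A + B).PosDef) :
    (∃ L : ℝ, 0 < L ∧
      Tendsto (fun P : ℝ => ((P : ℂ) • A + B).det.re / P ^ A.rank)
        atTop (nhds L))
    ∧ ∃ C : ℝ, ∀ᶠ P : ℝ in atTop,
        |Real.log (((P : ℂ) • A + B).det.re) - (A.rank : ℝ) * Real.log P| ≤ C :=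
  det_div_pow_rank_tendsto_const_general A B hA hAB
end

section
/- Let H1 ∈ ℂ^{r×t_x}, H2 ∈ ℂ^{r×t_s}, W ∈ ℂ^{t_x×t_s}, let ΣX ∈ ℂ^{t_x×t_x} be Hermitian positive definite and ΣS ∈ ℂ^{t_s×t_s} Hermitian positive semidefinite. Then the (t_x+r)×(t_x+r) Hermitian positive semidefinite block matrix M0 = [[ΣX + W ΣS W*, ΣX H1* + W ΣS H2*], [H1 ΣX + H2 ΣS W*, H1 ΣX H1* + H2 ΣS H2*]] has rank(M0) = t_x + rank( (H2 − H1 W) ΣS (H2 − H1 W)* ). -/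
/-!
Write `ΣX = C* C` and `ΣS = B* B`. Then `M0 = G G*` for `G = [[C*, W B*], [H1 C*, H2 B*]]`, so `M0`
is positive semidefinite and `rank M0 = rank G`. As `C*` is invertible, the Schur complement of
`C*` in `G` is `H2 B* - H1 C* (C*)⁻¹ W B* = (H2 - H1 W) B*`, whence
`rank G = t_x + rank ((H2 - H1 W) B*) = t_x + rank ((H2 - H1 W) ΣS (H2 - H1 W)*)`.
-/

open Matrix
open scoped ComplexOrder

theorem Submodule.finrank_prod {K M N : Type*} [DivisionRing K] [AddCommGroup M] [AddCommGroup N]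
    [Module K M] [Module K N] [FiniteDimensional K M] [FiniteDimensional K N]
    (p : Submodule K M) (q : Submodule K N) :
    Module.finrank K (p.prod q) = Module.finrank K p + Module.finrank K q := by
  rw [← p.range_subtype, ← q.range_subtype, ← LinearMap.range_prodMap,
    LinearMap.finrank_range_of_inj (p.injective_subtype.prodMap q.injective_subtype),
    Module.finrank_prod, p.range_subtype, q.range_subtype]

namespace Matrix

variable {K l m n o : Type*} [Field K] [Fintype l] [Fintype m] [Fintype n] [Fintype o]

theorem rank_fromBlocks_zero_zero (A : Matrix l m K) (D : Matrix n o K) :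
    (fromBlocks A 0 0 D).rank = A.rank + D.rank := by
  have h : (fromBlocks A 0 0 D).mulVecLin =
      (LinearEquiv.sumArrowLequivProdArrow l n K K).symm.toLinearMap ∘ₗ
        A.mulVecLin.prodMap D.mulVecLin ∘ₗ
        (LinearEquiv.sumArrowLequivProdArrow m o K K).toLinearMap := by
    ext v i
    rcases i with i | i <;>
      simp [fromBlocks_mulVec, LinearEquiv.sumArrowLequivProdArrow, Equiv.sumArrowEquivProdArrow]
  rw [rank, h, LinearMap.range_comp, LinearMap.range_comp_of_range_eq_top _ (LinearEquiv.range _),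
    LinearEquiv.finrank_map_eq, LinearMap.range_prodMap, Submodule.finrank_prod, rank, rank]

theorem rank_fromBlocks_of_isUnit [DecidableEq m] [DecidableEq n] [DecidableEq o]
    {A : Matrix m m K} (hA : IsUnit A) (B : Matrix m o K) (C : Matrix n m K) (D : Matrix n o K) :
    (fromBlocks A B C D).rank = Fintype.card m + (D - C * A⁻¹ * B).rank := by
  let := hA.invertible
  rw [fromBlocks_eq_of_invertible₁₁, invOf_eq_nonsing_inv,
    rank_mul_eq_left_of_isUnit_det _ _ (by simp), rank_mul_eq_right_of_isUnit_det _ _ (by simp),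
    rank_fromBlocks_zero_zero, rank_of_isUnit A hA]

end Matrix

theorem fromBlocks_dpc_eq_mul_conjTranspose {R p q r x s : Type*} [Ring R] [StarRing R]
    [Fintype p] [Fintype q] [Fintype x] [Fintype s]
    (H1 : Matrix r x R) (H2 : Matrix r s R) (W : Matrix x s R) (C : Matrix p x R)
    (B : Matrix q s R) :
    let SX := Cᴴ * C
    let SS := Bᴴ * B
    fromBlocks (SX + W * SS * Wᴴ) (SX * H1ᴴ + W * SS * H2ᴴ)
        (H1 * SX + H2 * SS * Wᴴ) (H1 * SX * H1ᴴ + H2 * SS * H2ᴴ) =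
      fromBlocks Cᴴ (W * Bᴴ) (H1 * Cᴴ) (H2 * Bᴴ) *
        (fromBlocks Cᴴ (W * Bᴴ) (H1 * Cᴴ) (H2 * Bᴴ))ᴴ := by
  simp only [fromBlocks_conjTranspose, fromBlocks_multiply, conjTranspose_mul,
    conjTranspose_conjTranspose, Matrix.mul_assoc]

/-- the noiseless part
`M0 = [[ΣX + W ΣS W*, ΣX H1* + W ΣS H2*], [H1 ΣX + H2 ΣS W*, H1 ΣX H1* + H2 ΣS H2*]]`
of the DPC covariance matrix is Hermitian positive semidefinite and has
`rank M0 = t_x + rank((H2 − H1 W) ΣS (H2 − H1 W)*)`. -/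
theorem rank_noiseless_dpc_block {r tx ts : ℕ}
    (H1 : Matrix (Fin r) (Fin tx) ℂ) (H2 : Matrix (Fin r) (Fin ts) ℂ)
    (W : Matrix (Fin tx) (Fin ts) ℂ)
    (SX : Matrix (Fin tx) (Fin tx) ℂ) (SS : Matrix (Fin ts) (Fin ts) ℂ)
    (hSX : SX.PosDef) (hSS : SS.PosSemidef) :
    (fromBlocks (SX + W * SS * Wᴴ) (SX * H1ᴴ + W * SS * H2ᴴ)
        (H1 * SX + H2 * SS * Wᴴ) (H1 * SX * H1ᴴ + H2 * SS * H2ᴴ)).PosSemidef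
    ∧ (fromBlocks (SX + W * SS * Wᴴ) (SX * H1ᴴ + W * SS * H2ᴴ)
        (H1 * SX + H2 * SS * Wᴴ) (H1 * SX * H1ᴴ + H2 * SS * H2ᴴ)).rank
      = tx + ((H2 - H1 * W) * SS * (H2 - H1 * W)ᴴ).rank := by
  open scoped MatrixOrder in
  obtain ⟨C, rfl⟩ := CStarAlgebra.nonneg_iff_eq_star_mul_self.mp hSX.posSemidef.nonneg
  open scoped MatrixOrder in
  obtain ⟨B, rfl⟩ := CStarAlgebra.nonneg_iff_eq_star_mul_self.mp hSS.nonneg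
  simp only [star_eq_conjTranspose] at hSX ⊢
  rw [fromBlocks_dpc_eq_mul_conjTranspose]
  refine ⟨posSemidef_self_mul_conjTranspose _, ?_⟩
  have hCunit : IsUnit Cᴴ := isUnit_of_mul_isUnit_left hSX.isUnit
  rw [rank_self_mul_conjTranspose, rank_fromBlocks_of_isUnit hCunit, Fintype.card_fin,
    mul_nonsing_inv_cancel_right _ _ ((isUnit_iff_isUnit_det _).mp hCunit), ← Matrix.mul_assoc,
    ← Matrix.sub_mul, ← rank_self_mul_conjTranspose]
  simp only [conjTranspose_mul, conjTranspose_conjTranspose, Matrix.mul_assoc]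
end

section
/- (Scaling of the primary user's rate in the cognitive radio channel.) Let H̄1 = [H11 H21] ∈ ℂ^{r1×(t1+t2)} with H11 ∈ ℂ^{r1×t1} and H21 ∈ ℂ^{r1×t2}. Let Σ ∈ ℂ^{(t1+t2)×(t1+t2)} and Σ22 ∈ ℂ^{t2×t2} be Hermitian positive semidefinite, and set Σ' = Σ + diag(0_{t1}, Σ22) (the block-diagonal embedding of Σ22 into the last t2 coordinates). Assume rank(H̄1 Σ' H̄1*) = min(r1, rank Σ') and rank(H21 Σ22 H21*) = min(r1, rank Σ22). Then, as the real power level P tends to infinity, [ log det(I_{r1} + P·H̄1 Σ H̄1* + P·H21 Σ22 H21*) − log det(I_{r1} + P·H21 Σ22 H21*) ] / log P tends to min(r1, rank Σ') − min(r1, rank Σ22). -/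
open Matrix Filter Topology
open scoped ComplexOrder

/-! Diagonalising a positive semidefinite `A`, `log det (1 + P A) = ∑ᵢ log (1 + P λᵢ)`, and each
term with `λᵢ > 0` grows like `log P`, so `log det (1 + P A) / log P → rank A`. The two
determinants are of this form: the interference `H21 Σ22 H21*` seen through `[H11 H21]` is
`H̄1 diag(0, Σ22) H̄1*`, so the first one is `det (1 + P H̄1 Σ' H̄1*)`. The rank hypotheses then
turn the two ranks into `min r1 (rank Σ')` and `min r1 (rank Σ22)`. -/

theorem tendsto_log_one_add_mul_div_log {μ : ℝ} (hμ : 0 ≤ μ) :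
    Tendsto (fun P => Real.log (1 + P * μ) / Real.log P) atTop (𝓝 (if μ ≠ 0 then 1 else 0)) := by
  rcases hμ.eq_or_lt with rfl | hμ
  · simp
  rw [if_pos hμ.ne']
  have hlog : Tendsto (fun P => Real.log (P⁻¹ + μ)) atTop (𝓝 (Real.log μ)) :=
    ((Real.continuousAt_log hμ.ne').tendsto).comp
      (by simpa using tendsto_inv_atTop_zero.add_const μ)
  have hlim : Tendsto (fun P => 1 + Real.log (P⁻¹ + μ) / Real.log P) atTop (𝓝 1) := by
    simpa using (hlog.div_atTop Real.tendsto_log_atTop).const_add 1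
  refine hlim.congr' ?_
  filter_upwards [eventually_gt_atTop 1] with P hP
  have hP₀ : 0 < P := one_pos.trans hP
  rw [show 1 + P * μ = P * (P⁻¹ + μ) by field_simp,
    Real.log_mul hP₀.ne' (by positivity), add_div, div_self (Real.log_pos hP).ne']

variable {n 𝕜 : Type*} [Fintype n] [DecidableEq n] [RCLike 𝕜]

theorem Matrix.IsHermitian.det_cfc {A : Matrix n n 𝕜} (hA : A.IsHermitian) (f : ℝ → ℝ) :
    (cfc f A).det = ∏ i, (f (hA.eigenvalues i) : 𝕜) := by
  rw [hA.cfc_eq]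
  simp [IsHermitian.cfc, -Unitary.conjStarAlgAut_apply]

theorem Matrix.IsHermitian.det_one_add_smul {A : Matrix n n 𝕜} (hA : A.IsHermitian) (P : ℝ) :
    (1 + (P : 𝕜) • A).det = ∏ i, ((1 + P * hA.eigenvalues i : ℝ) : 𝕜) := by
  have hcfc : cfc (fun x => 1 + P * x) A = 1 + (P : 𝕜) • A := by
    rw [cfc_add .., cfc_const_one .., cfc_const_mul .., cfc_id' ..,
      RCLike.real_smul_eq_coe_smul (K := 𝕜)]
  rw [← hcfc, hA.det_cfc]

theorem Matrix.PosSemidef.tendsto_log_det_one_add_smul_div_log {A : Matrix n n 𝕜}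
    (hA : A.PosSemidef) :
    Tendsto (fun P : ℝ => Real.log (RCLike.re (1 + (P : 𝕜) • A).det) / Real.log P) atTop
      (𝓝 A.rank) := by
  set μ := hA.isHermitian.eigenvalues
  have hrank : (A.rank : ℝ) = ∑ i, if μ i ≠ 0 then 1 else 0 := by
    rw [hA.isHermitian.rank_eq_card_non_zero_eigs, Fintype.card_subtype, Finset.sum_boole]
  rw [hrank]
  refine (tendsto_finsetSum _ fun i _ =>
    tendsto_log_one_add_mul_div_log (hA.eigenvalues_nonneg i)).congr' ?_
  filter_upwards [eventually_gt_atTop 0] with P hP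
  have hpos : ∀ i ∈ Finset.univ, 1 + P * μ i ≠ 0 := fun i _ =>
    (add_pos_of_pos_of_nonneg one_pos (mul_nonneg hP.le (hA.eigenvalues_nonneg i))).ne'
  rw [hA.isHermitian.det_one_add_smul, ← RCLike.ofReal_prod, RCLike.ofReal_re,
    Real.log_prod hpos, Finset.sum_div]

theorem Matrix.fromCols_mul_fromBlocks_zero_zero_zero_mul_fromRows {l m₁ m₂ α : Type*}
    [Fintype m₁] [Fintype m₂] [Semiring α] (A₁ : Matrix l m₁ α) (A₂ : Matrix l m₂ α)
    (D : Matrix m₂ m₂ α) (B₁ : Matrix m₁ l α) (B₂ : Matrix m₂ l α) :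
    fromCols A₁ A₂ * fromBlocks (0 : Matrix m₁ m₁ α) 0 0 D * fromRows B₁ B₂ = A₂ * D * B₂ := by
  simp [fromCols_mul_fromBlocks, fromCols_mul_fromRows]

theorem Matrix.PosSemidef.fromBlocks_zero_zero_zero {m₁ m₂ : Type*} [Fintype m₁] [Fintype m₂]
    [DecidableEq m₂] {D : Matrix m₂ m₂ 𝕜} (hD : D.PosSemidef) :
    (fromBlocks (0 : Matrix m₁ m₁ 𝕜) 0 0 D).PosSemidef := by
  have h : fromBlocks (0 : Matrix m₁ m₁ 𝕜) 0 0 D =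
      fromRows (0 : Matrix m₁ m₂ 𝕜) 1 * D * (fromRows (0 : Matrix m₁ m₂ 𝕜) 1)ᴴ := by
    rw [conjTranspose_fromRows_eq_fromCols_conjTranspose, fromRows_mul, fromRows_mul_fromCols]
    simp
  exact h ▸ hD.mul_mul_conjTranspose_same _

/-- scaling of the primary user's rate in the cognitive radio channel:
with `H̄1 = [H11 H21]`, `Σ' = Σ + diag(0, Σ22)`, and the stated rank conditions,
`[ log det(I + P·H̄1 Σ H̄1* + P·H21 Σ22 H21*) − log det(I + P·H21 Σ22 H21*) ] / log P`
tends to `min(r1, rank Σ') − min(r1, rank Σ22)` as `P → ∞`. -/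
theorem primary_rate_scaling {r1 t1 t2 : ℕ}
    (H11 : Matrix (Fin r1) (Fin t1) ℂ) (H21 : Matrix (Fin r1) (Fin t2) ℂ)
    (S : Matrix (Fin t1 ⊕ Fin t2) (Fin t1 ⊕ Fin t2) ℂ)
    (S22 : Matrix (Fin t2) (Fin t2) ℂ)
    (hS : S.PosSemidef) (hS22 : S22.PosSemidef)
    (hrank1 : (fromCols H11 H21 * (S + fromBlocks 0 0 0 S22) *
        (fromCols H11 H21)ᴴ).rank = min r1 (S + fromBlocks 0 0 0 S22).rank)
    (hrank2 : (H21 * S22 * H21ᴴ).rank = min r1 S22.rank) :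
    Tendsto (fun P : ℝ =>
        (Real.log ((1 + (P : ℂ) • (fromCols H11 H21 * S * (fromCols H11 H21)ᴴ)
              + (P : ℂ) • (H21 * S22 * H21ᴴ)).det.re)
          - Real.log ((1 + (P : ℂ) • (H21 * S22 * H21ᴴ)).det.re)) / Real.log P)
      atTop
      (nhds ((min r1 (S + fromBlocks 0 0 0 S22).rank : ℝ) - (min r1 S22.rank : ℝ))) := by
  have hS' : (S + fromBlocks 0 0 0 S22).PosSemidef := hS.add hS22.fromBlocks_zero_zero_zero
  have hcov : fromCols H11 H21 * (S + fromBlocks 0 0 0 S22) * (fromCols H11 H21)ᴴ =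
      fromCols H11 H21 * S * (fromCols H11 H21)ᴴ + H21 * S22 * H21ᴴ := by
    rw [Matrix.mul_add, Matrix.add_mul, conjTranspose_fromCols_eq_fromRows_conjTranspose,
      fromCols_mul_fromBlocks_zero_zero_zero_mul_fromRows]
  have hlim :=
    (hS'.mul_mul_conjTranspose_same (fromCols H11 H21)).tendsto_log_det_one_add_smul_div_log.sub
      (hS22.mul_mul_conjTranspose_same H21).tendsto_log_det_one_add_smul_div_log
  rw [hrank1, hrank2, hcov] at hlim
  push_cast at hlim
  refine hlim.congr fun P => ?_
  rw [smul_add, ← add_assoc, sub_div]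
  rfl
end
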